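/- arXiv:1701.06652 — 2 statements merged into one kernel-verified Lean document; each statement's English description precedes it below -/
import Mathlib

section
/- Let e: ℝⁿ → ℝⁿ, f: ℝⁿ×ℝᵐ → ℝⁿ, g: ℝⁿ×ℝᵐ → ℝᵖ, let P be an n×n symmetric positive-definite matrix, and let μ > 0 satisfy the stability constraint |f(x₁,u) − f(x₂,u)|²_{P⁻¹} − 2(x₁−x₂)'(e(x₁)−e(x₂)) + |x₁−x₂|²_{P+μI} + |g(x₁,u)−g(x₂,u)|² ≤ 0 for all x₁, x₂ ∈ ℝⁿ and u ∈ ℝᵐ. Let u: ℕ → ℝᵐ be any input sequence, and let x₁, x₂: ℕ → ℝⁿ be any two sequences satisfying e(xᵢ(t+1)) = f(xᵢ(t), u(t)) for all t ∈ ℕ (i = 1,2), with outputs yᵢ(t) = g(xᵢ(t), u(t)). Then for every T ∈ ℕ, Σ_{t=0}^{T} ( μ|x₁(t)−x₂(t)|² + |y₁(t)−y₂(t)|² ) ≤ |e(x₁(0))−e(x₂(0))|²_{P⁻¹}. In particular Σ_{t=0}^{∞} |x₁(t)−x₂(t)|² < ∞ and Σ_{t=0}^{∞} |y₁(t)−y₂(t)|²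 < ∞, i.e. the model is globally incrementally ℓ² stable. -/
/-!
The storage function `V t = |e(x₁ t) − e(x₂ t)|²_{P⁻¹}` decreases along the pair of trajectories by
at least the supply `μ|x₁ t − x₂ t|² + |y₁ t − y₂ t|²`. Indeed, completing the square gives
`2 a⬝b ≤ |a|²_P + |b|²_{P⁻¹}`, which turns the cross term `2 (x₁ − x₂)⬝(e x₁ − e x₂)` of the
stability constraint into `V t`, while `f (xᵢ t) (u t) = e (xᵢ (t + 1))` turns its first term into
`V (t + 1)`. Summing the decrease telescopes, and `V ≥ 0` bounds all partial sums by `V 0`.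
-/

open Matrix Finset

theorem Matrix.PosDef.two_mul_dotProduct_le {ι : Type*} [Fintype ι] [DecidableEq ι]
    {P : Matrix ι ι ℝ} (hP : P.PosDef) (a b : ι → ℝ) :
    2 * (a ⬝ᵥ b) ≤ a ⬝ᵥ (P *ᵥ a) + b ⬝ᵥ (P⁻¹ *ᵥ b) := by
  set c := P⁻¹ *ᵥ b
  have hPc : P *ᵥ c = b := by
    rw [mulVec_mulVec, mul_nonsing_inv _ (isUnit_iff_ne_zero.mpr hP.det_pos.ne'), one_mulVec]
  have hcPa : c ⬝ᵥ (P *ᵥ a) = a ⬝ᵥ b := by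
    rw [dotProduct_mulVec, ← mulVec_transpose, ← conjTranspose_eq_transpose_of_trivial,
      hP.isHermitian.eq, hPc, dotProduct_comm]
  have hsq : 0 ≤ (a - c) ⬝ᵥ (P *ᵥ (a - c)) := hP.posSemidef.dotProduct_mulVec_nonneg (a - c)
  rw [mulVec_sub, sub_dotProduct, dotProduct_sub, dotProduct_sub, hPc, hcPa,
    dotProduct_comm c b] at hsq
  linarith

theorem dotProduct_add_smul_one_mulVec {ι : Type*} [Fintype ι] [DecidableEq ι]
    (P : Matrix ι ι ℝ) (μ : ℝ) (a : ι → ℝ) :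
    a ⬝ᵥ ((P + μ • (1 : Matrix ι ι ℝ)) *ᵥ a) = a ⬝ᵥ (P *ᵥ a) + μ * (a ⬝ᵥ a) := by
  rw [add_mulVec, dotProduct_add, smul_mulVec, one_mulVec, dotProduct_smul, smul_eq_mul]

/-- With `a = x₁ − x₂`, `b = e x₁ − e x₂`, `c = f x₁ u − f x₂ u` and `d = g x₁ u − g x₂ u`,
the stability constraint at a single point yields the one-step decrease of the storage function. -/
theorem Matrix.PosDef.dotProduct_inv_mulVec_add_le {ι κ : Type*} [Fintype ι] [DecidableEq ι]
    [Fintype κ] {P : Matrix ι ι ℝ} (hP : P.PosDef) {μ : ℝ} {a b c : ι → ℝ} {d : κ → ℝ}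
    (h : c ⬝ᵥ (P⁻¹ *ᵥ c) - 2 * (a ⬝ᵥ b) + a ⬝ᵥ ((P + μ • (1 : Matrix ι ι ℝ)) *ᵥ a)
      + d ⬝ᵥ d ≤ 0) :
    c ⬝ᵥ (P⁻¹ *ᵥ c) + (μ * (a ⬝ᵥ a) + d ⬝ᵥ d) ≤ b ⬝ᵥ (P⁻¹ *ᵥ b) := by
  rw [dotProduct_add_smul_one_mulVec] at h
  linarith [hP.two_mul_dotProduct_le a b]

theorem sum_range_le_of_add_le {V w : ℕ → ℝ} (hV : ∀ t, 0 ≤ V t)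
    (hstep : ∀ t, V (t + 1) + w t ≤ V t) (T : ℕ) :
    ∑ t ∈ range T, w t ≤ V 0 :=
  calc ∑ t ∈ range T, w t ≤ ∑ t ∈ range T, (V t - V (t + 1)) :=
        sum_le_sum fun t _ => by linarith [hstep t]
    _ = V 0 - V T := sum_range_sub' V T
    _ ≤ V 0 := by linarith [hV T]

/-- Under the stability constraint, for any two trajectories
`x₁, x₂` of the implicit model `e(x(t+1)) = f(x(t),u(t))` driven by the same
input `u`, with outputs `yᵢ(t) = g(xᵢ(t),u(t))`, we have for every `T`
`Σ_{t=0}^{T} ( μ|x₁(t)−x₂(t)|² + |y₁(t)−y₂(t)|² ) ≤ |e(x₁(0))−e(x₂(0))|²_{P⁻¹}`,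
and in particular the state and output differences are square-summable
(global incremental ℓ² stability). -/
theorem stmt4 {n m p : ℕ}
    (e : (Fin n → ℝ) → (Fin n → ℝ))
    (f : (Fin n → ℝ) → (Fin m → ℝ) → (Fin n → ℝ))
    (g : (Fin n → ℝ) → (Fin m → ℝ) → (Fin p → ℝ))
    (P : Matrix (Fin n) (Fin n) ℝ) (hP : P.PosDef) (μ : ℝ) (hμ : 0 < μ)
    (hstab : ∀ (x₁ x₂ : Fin n → ℝ) (u : Fin m → ℝ),
      (f x₁ u - f x₂ u) ⬝ᵥ (P⁻¹ *ᵥ (f x₁ u - f x₂ u))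
        - 2 * ((x₁ - x₂) ⬝ᵥ (e x₁ - e x₂))
        + (x₁ - x₂) ⬝ᵥ ((P + μ • (1 : Matrix (Fin n) (Fin n) ℝ)) *ᵥ (x₁ - x₂))
        + (g x₁ u - g x₂ u) ⬝ᵥ (g x₁ u - g x₂ u) ≤ 0)
    (u : ℕ → Fin m → ℝ) (x₁ x₂ : ℕ → Fin n → ℝ)
    (hdyn₁ : ∀ t : ℕ, e (x₁ (t + 1)) = f (x₁ t) (u t))
    (hdyn₂ : ∀ t : ℕ, e (x₂ (t + 1)) = f (x₂ t) (u t)) :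
    (∀ T : ℕ,
      ∑ t ∈ Finset.range (T + 1),
        (μ * ((x₁ t - x₂ t) ⬝ᵥ (x₁ t - x₂ t))
          + (g (x₁ t) (u t) - g (x₂ t) (u t)) ⬝ᵥ (g (x₁ t) (u t) - g (x₂ t) (u t)))
        ≤ (e (x₁ 0) - e (x₂ 0)) ⬝ᵥ (P⁻¹ *ᵥ (e (x₁ 0) - e (x₂ 0)))) ∧
    Summable (fun t : ℕ => (x₁ t - x₂ t) ⬝ᵥ (x₁ t - x₂ t)) ∧
    Summable (fun t : ℕ =>
      (g (x₁ t) (u t) - g (x₂ t) (u t)) ⬝ᵥ (g (x₁ t) (u t) - g (x₂ t) (u t))) := by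
  have hV (t : ℕ) : 0 ≤ (e (x₁ t) - e (x₂ t)) ⬝ᵥ (P⁻¹ *ᵥ (e (x₁ t) - e (x₂ t))) :=
    hP.inv.posSemidef.dotProduct_mulVec_nonneg _
  have hstep (t : ℕ) := hP.dotProduct_inv_mulVec_add_le <| by
    simpa only [← hdyn₁ t, ← hdyn₂ t] using hstab (x₁ t) (x₂ t) (u t)
  have hbound := sum_range_le_of_add_le hV hstep
  have hx (t : ℕ) : 0 ≤ (x₁ t - x₂ t) ⬝ᵥ (x₁ t - x₂ t) := dotProduct_self_star_nonneg _
  have hy (t : ℕ) : 0 ≤ (g (x₁ t) (u t) - g (x₂ t) (u t)) ⬝ᵥ (g (x₁ t) (u t) - g (x₂ t) (u t)) :=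
    dotProduct_self_star_nonneg _
  have hsum :=
    summable_of_sum_range_le (fun t => add_nonneg (mul_nonneg hμ.le (hx t)) (hy t)) hbound
  refine ⟨fun T => hbound (T + 1), (hsum.div_const μ).of_nonneg_of_le hx fun t => ?_,
    hsum.of_nonneg_of_le hy fun t => by linarith [mul_nonneg hμ.le (hx t)]⟩
  rw [le_div_iff₀ hμ]
  linarith [hy t]
end

section
/- Let e: ℝⁿ → ℝⁿ, f: ℝⁿ×ℝᵐ → ℝⁿ, g: ℝⁿ×ℝᵐ → ℝᵖ, let P be an n×n symmetric positive-definite matrix, let T ∈ ℕ, and let data ũ: {0,…,T} → ℝᵐ, ỹ: {0,…,T} → ℝᵖ, x̃: {0,…,T+1} → ℝⁿ be given. Define ε(t) = e(x̃(t+1)) − f(x̃(t),ũ(t)), and for each t the robust identification error term E(t) = sup over x ∈ ℝⁿ of { |f(x,ũ(t)) − f(x̃(t),ũ(t)) − ε(t)|²_{P⁻¹} + |x − x̃(t)|²_P − 2(x − x̃(t))'(e(x) − e(x̃(t))) + |g(x,ũ(t)) − ỹ(t)|² }. Then Ĵ_L ≤ Σ_{t=0}^{T} E(t), where Ĵ_L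 is the supremum over all sequences z: {0,…,T+1} → ℝⁿ with z(0) = x̃(0) of Σ_{t=0}^{T} |g(z(t),ũ(t)) − ỹ(t)|² − Σ_{t=0}^{T−1} 2(z(t+1) − x̃(t+1))'(e(z(t+1)) − f(z(t),ũ(t))), provided 2(x−x̃(t))'(e(x)−e(x̃(t))) ≥ |x−x̃(t)|²_P for all x ∈ ℝⁿ and all t (so that the storage function V(x,t) = 2(x−x̃(t))'(e(x)−e(x̃(t))) − |x−x̃(t)|²_P is nonnegative). -/
/-!
Along any trajectory `z` starting at `x̃(0)`, set `V t := V(z t, t)`, so that `V 0 = 0`.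
Young's inequality `2 a'b ≤ |a|²_P + |b|²_{P⁻¹}`, applied to `a = z(t+1) − x̃(t+1)` and
`b = f(z t, ũ t) − e(x̃(t+1))`, bounds the `t`-th term of the Lagrangian by the integrand of
`E(t)` at `z t` plus `V t − V (t+1)`; the final output term is bounded by the integrand of
`E(T)` plus `V T` because `|b|²_{P⁻¹} ≥ 0`. Summing, the storage terms telescope to `V 0 = 0`.
-/

open Matrix

@[simp, norm_cast]
theorem EReal.coe_finset_sum {ι : Type*} (s : Finset ι) (f : ι → ℝ) :
    ((∑ i ∈ s, f i : ℝ) : EReal) = ∑ i ∈ s, (f i : EReal) :=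
  map_sum (⟨⟨Real.toEReal, EReal.coe_zero⟩, EReal.coe_add⟩ : ℝ →+ EReal) f s

namespace Matrix

variable {ι : Type*} [Fintype ι]

theorem PosSemidef.dotProduct_mulVec_nonneg_real {M : Matrix ι ι ℝ} (hM : M.PosSemidef)
    (x : ι → ℝ) : 0 ≤ x ⬝ᵥ (M *ᵥ x) := by
  simpa using hM.dotProduct_mulVec_nonneg x

theorem PosDef.two_mul_dotProduct_le_s8 [DecidableEq ι] {P : Matrix ι ι ℝ} (hP : P.PosDef)
    (a b : ι → ℝ) : 2 * (a ⬝ᵥ b) ≤ a ⬝ᵥ (P *ᵥ a) + b ⬝ᵥ (P⁻¹ *ᵥ b) := by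
  set c := P⁻¹ *ᵥ b
  have hPc : P *ᵥ c = b := by
    rw [mulVec_mulVec, mul_nonsing_inv _ ((isUnit_iff_isUnit_det P).mp hP.isUnit), one_mulVec]
  have hcPa : c ⬝ᵥ (P *ᵥ a) = b ⬝ᵥ a := by
    have hPT : Pᵀ = P := hP.isHermitian.eq
    rw [dotProduct_mulVec, ← hPT, vecMul_transpose, hPc]
  have hsq := hP.posSemidef.dotProduct_mulVec_nonneg_real (a - c)
  rw [mulVec_sub, sub_dotProduct, dotProduct_sub, dotProduct_sub, hPc, hcPa,
    dotProduct_comm c b, dotProduct_comm b a] at hsq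
  linarith

end Matrix

theorem Finset.sum_range_succ_sub_sum_le_of_telescoping {a b s V : ℕ → ℝ} {T : ℕ}
    (hstep : ∀ t < T, a t - b t ≤ s t + V t - V (t + 1)) (hlast : a T ≤ s T + V T)
    (hV₀ : V 0 = 0) :
    ∑ t ∈ range (T + 1), a t - ∑ t ∈ range T, b t ≤ ∑ t ∈ range (T + 1), s t := by
  have hsteps : ∑ t ∈ range T, (a t - b t) ≤ ∑ t ∈ range T, s t + (V 0 - V T) := by
    rw [← sum_range_sub' V T, ← sum_add_distrib]
    exact sum_le_sum fun t ht => by linarith [hstep t (mem_range.mp ht)]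
  rw [sum_sub_distrib] at hsteps
  rw [sum_range_succ, sum_range_succ]
  linarith

namespace RobustIdentification

variable {n m p : ℕ} (e : (Fin n → ℝ) → (Fin n → ℝ))
  (f : (Fin n → ℝ) → (Fin m → ℝ) → (Fin n → ℝ)) (g : (Fin n → ℝ) → (Fin m → ℝ) → (Fin p → ℝ))
  (P : Matrix (Fin n) (Fin n) ℝ) (u : ℕ → Fin m → ℝ) (y : ℕ → Fin p → ℝ) (xs : ℕ → Fin n → ℝ)

-- `storage t x` is `V(x,t)`, and `E(t)` is the supremum of `errorIntegrand t` over `x`.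
def storage (t : ℕ) (x : Fin n → ℝ) : ℝ :=
  2 * ((x - xs t) ⬝ᵥ (e x - e (xs t))) - (x - xs t) ⬝ᵥ (P *ᵥ (x - xs t))

noncomputable def errorIntegrand (t : ℕ) (x : Fin n → ℝ) : ℝ :=
  (f x (u t) - f (xs t) (u t) - (e (xs (t + 1)) - f (xs t) (u t))) ⬝ᵥ
      (P⁻¹ *ᵥ (f x (u t) - f (xs t) (u t) - (e (xs (t + 1)) - f (xs t) (u t))))
    + (x - xs t) ⬝ᵥ (P *ᵥ (x - xs t))
    - 2 * ((x - xs t) ⬝ᵥ (e x - e (xs t)))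
    + (g x (u t) - y t) ⬝ᵥ (g x (u t) - y t)

theorem storage_self (t : ℕ) : storage e P xs t (xs t) = 0 := by
  simp [storage]

theorem errorIntegrand_eq (t : ℕ) (x : Fin n → ℝ) :
    errorIntegrand e f g P u y xs t x =
      (f x (u t) - e (xs (t + 1))) ⬝ᵥ (P⁻¹ *ᵥ (f x (u t) - e (xs (t + 1))))
        - storage e P xs t x + (g x (u t) - y t) ⬝ᵥ (g x (u t) - y t) := by
  rw [errorIntegrand, storage, sub_sub_sub_cancel_right]
  ring

variable {P}

theorem output_sub_multiplier_le (hP : P.PosDef) (t : ℕ) (x x' : Fin n → ℝ) :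
    (g x (u t) - y t) ⬝ᵥ (g x (u t) - y t)
        - 2 * ((x' - xs (t + 1)) ⬝ᵥ (e x' - f x (u t)))
      ≤ errorIntegrand e f g P u y xs t x + storage e P xs t x
        - storage e P xs (t + 1) x' := by
  have hsplit : e x' - f x (u t) = (e x' - e (xs (t + 1))) - (f x (u t) - e (xs (t + 1))) := by
    abel
  have hyoung := hP.two_mul_dotProduct_le_s8 (x' - xs (t + 1)) (f x (u t) - e (xs (t + 1)))
  rw [errorIntegrand_eq, hsplit, dotProduct_sub (x' - xs (t + 1))]
  unfold storage
  linarith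

theorem output_le (hP : P.PosDef) (t : ℕ) (x : Fin n → ℝ) :
    (g x (u t) - y t) ⬝ᵥ (g x (u t) - y t)
      ≤ errorIntegrand e f g P u y xs t x + storage e P xs t x := by
  have hnonneg :=
    hP.inv.posSemidef.dotProduct_mulVec_nonneg_real (f x (u t) - e (xs (t + 1)))
  rw [errorIntegrand_eq]
  linarith

end RobustIdentification

open RobustIdentification in
theorem stmt8_general {n m p : ℕ}
    (e : (Fin n → ℝ) → (Fin n → ℝ))
    (f : (Fin n → ℝ) → (Fin m → ℝ) → (Fin n → ℝ))
    (g : (Fin n → ℝ) → (Fin m → ℝ) → (Fin p → ℝ))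
    (P : Matrix (Fin n) (Fin n) ℝ) (hP : P.PosDef)
    (T : ℕ) (u : ℕ → Fin m → ℝ) (y : ℕ → Fin p → ℝ) (xs : ℕ → Fin n → ℝ) :
    (⨆ z : {z : ℕ → Fin n → ℝ // z 0 = xs 0},
        ((∑ t ∈ Finset.range (T + 1),
            (g (z.1 t) (u t) - y t) ⬝ᵥ (g (z.1 t) (u t) - y t)
          - ∑ t ∈ Finset.range T,
            2 * ((z.1 (t + 1) - xs (t + 1)) ⬝ᵥ
                  (e (z.1 (t + 1)) - f (z.1 t) (u t))) : ℝ) : EReal))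
      ≤ ∑ t ∈ Finset.range (T + 1),
          ⨆ x : Fin n → ℝ,
            (((f x (u t) - f (xs t) (u t) - (e (xs (t + 1)) - f (xs t) (u t))) ⬝ᵥ
                (P⁻¹ *ᵥ (f x (u t) - f (xs t) (u t) - (e (xs (t + 1)) - f (xs t) (u t))))
              + (x - xs t) ⬝ᵥ (P *ᵥ (x - xs t))
              - 2 * ((x - xs t) ⬝ᵥ (e x - e (xs t)))
              + (g x (u t) - y t) ⬝ᵥ (g x (u t) - y t) : ℝ) : EReal) := by
  refine iSup_le fun ⟨z, hz0⟩ => ?_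
  have hreal := Finset.sum_range_succ_sub_sum_le_of_telescoping
    (V := fun t => storage e P xs t (z t))
    (fun t _ => output_sub_multiplier_le e f g u y xs hP t (z t) (z (t + 1)))
    (output_le e f g u y xs hP T (z T)) (by simp only [hz0, storage_self])
  calc _ ≤ ((∑ t ∈ Finset.range (T + 1), errorIntegrand e f g P u y xs t (z t) : ℝ) : EReal) :=
        EReal.coe_le_coe_iff.mpr hreal
    _ = ∑ t ∈ Finset.range (T + 1), (errorIntegrand e f g P u y xs t (z t) : EReal) :=
        EReal.coe_finset_sum _ _
    _ ≤ _ := Finset.sum_le_sum fun t _ =>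
        le_iSup (fun x => (errorIntegrand e f g P u y xs t x : EReal)) (z t)

/-- If the storage function
`V(x,t) = 2(x−x̃(t))'(e(x)−e(x̃(t))) − |x−x̃(t)|²_P` is nonnegative, then the
Lagrangian relaxation bound `Ĵ_L` is bounded above by the robust identification
error `Σ_{t=0}^{T} E(t)`, where `E(t)` is the supremum over `x` of
`|f(x,ũ(t)) − f(x̃(t),ũ(t)) − ε(t)|²_{P⁻¹} + |x − x̃(t)|²_P
 − 2(x − x̃(t))'(e(x) − e(x̃(t))) + |g(x,ũ(t)) − ỹ(t)|²`
with `ε(t) = e(x̃(t+1)) − f(x̃(t),ũ(t))`. Suprema are taken in the extended reals. -/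
theorem stmt8 {n m p : ℕ}
    (e : (Fin n → ℝ) → (Fin n → ℝ))
    (f : (Fin n → ℝ) → (Fin m → ℝ) → (Fin n → ℝ))
    (g : (Fin n → ℝ) → (Fin m → ℝ) → (Fin p → ℝ))
    (P : Matrix (Fin n) (Fin n) ℝ) (hP : P.PosDef)
    (T : ℕ) (u : ℕ → Fin m → ℝ) (y : ℕ → Fin p → ℝ) (xs : ℕ → Fin n → ℝ)
    (hV : ∀ (t : ℕ) (x : Fin n → ℝ),
      (x - xs t) ⬝ᵥ (P *ᵥ (x - xs t)) ≤ 2 * ((x - xs t) ⬝ᵥ (e x - e (xs t)))) :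
    (⨆ z : {z : ℕ → Fin n → ℝ // z 0 = xs 0},
        ((∑ t ∈ Finset.range (T + 1),
            (g (z.1 t) (u t) - y t) ⬝ᵥ (g (z.1 t) (u t) - y t)
          - ∑ t ∈ Finset.range T,
            2 * ((z.1 (t + 1) - xs (t + 1)) ⬝ᵥ
                  (e (z.1 (t + 1)) - f (z.1 t) (u t))) : ℝ) : EReal))
      ≤ ∑ t ∈ Finset.range (T + 1),
          ⨆ x : Fin n → ℝ,
            (((f x (u t) - f (xs t) (u t) - (e (xs (t + 1)) - f (xs t) (u t))) ⬝ᵥ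
                (P⁻¹ *ᵥ (f x (u t) - f (xs t) (u t) - (e (xs (t + 1)) - f (xs t) (u t))))
              + (x - xs t) ⬝ᵥ (P *ᵥ (x - xs t))
              - 2 * ((x - xs t) ⬝ᵥ (e x - e (xs t)))
              + (g x (u t) - y t) ⬝ᵥ (g x (u t) - y t) : ℝ) : EReal) :=
  stmt8_general e f g P hP T u y xs
end
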